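/- For every integer q ≥ 1, the series ∑_{n≥0} a_{q,n}·(n+q)·2^{−(n+q)} converges and equals 2(2^q − 1). (This is the value F_s(1,0) of the derivative in s of F(s,0) = ∑_{w∈χ(0^q)} (s/2)^{ℓ(w)+q} at s = 1.) -/

import Mathlib

/-!
Splitting a nonempty word of `χ(0^q)` as `0^k 1 t` with `k < q` and `t ∈ χ(0^q)` shows that
`b n = a_{q,n} / 2^n` solves the renewal equation `b = δ₀ + c ⋆ b` with `c k = 2^{-k}` for
`1 ≤ k ≤ q`. For a nonnegative solution with `∑ c = s < 1`, bounding partial sums gives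
summability, and the Cauchy product then yields `∑ b = 1 / (1 - s)` and
`∑ n b n = (∑ k c k) / (1 - s)^2`. Here `1 - s = 2^{-q}` and `∑ k c k = 2 - (q + 2) 2^{-q}`,
so `∑ a_{q,n} (n + q) 2^{-(n+q)} = 2^{-q} ∑ (n + q) b n = 2 (2^q - 1)`: the expected waiting
time for a run of `q` zeros in fair coin tosses.
-/

/-- A binary word (`false` = 0, `true` = 1) lies in `χ(0^q)` iff it contains no block of `q`
consecutive 0s and its rightmost digit is 1 (the empty word is allowed). -/
def goodWord (q : ℕ) (w : List Bool) : Prop :=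
  ¬ (List.replicate q false <:+: w) ∧ ∀ h : w ≠ [], w.getLast h = true

/-- `a q n` is the number of words of length `n` in `χ(0^q)`. -/
noncomputable def wordCount (q n : ℕ) : ℕ :=
  Nat.card {w : Fin n → Bool // goodWord q (List.ofFn w)}

open Finset

lemma HasSum.sum_antidiagonal_mul_of_nonneg {u v : ℕ → ℝ} {a b : ℝ} (hu : HasSum u a)
    (hv : HasSum v b) (hu₀ : 0 ≤ u) (hv₀ : 0 ≤ v) :
    HasSum (fun n => ∑ p ∈ antidiagonal n, u p.1 * v p.2) (a * b) := by
  have huv := hu.summable.mul_of_nonneg hv.summable hu₀ hv₀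
  rw [← hu.tsum_eq, ← hv.tsum_eq,
    hu.summable.tsum_mul_tsum_eq_tsum_sum_antidiagonal hv.summable huv]
  exact (summable_sum_mul_antidiagonal_of_summable_mul huv).hasSum

lemma sum_range_sum_antidiagonal_mul_le {u v : ℕ → ℝ} (hu : 0 ≤ u) (hv : 0 ≤ v) (N : ℕ) :
    ∑ n ∈ range N, ∑ p ∈ antidiagonal n, u p.1 * v p.2 ≤
      (∑ k ∈ range N, u k) * ∑ m ∈ range N, v m :=
  calc ∑ n ∈ range N, ∑ p ∈ antidiagonal n, u p.1 * v p.2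
      = ∑ k ∈ range N, ∑ m ∈ range (N - k), u k * v m := by
        simp only [Nat.sum_antidiagonal_eq_sum_range_succ fun k m => u k * v m]
        exact sum_range_diag_flip N fun k m => u k * v m
    _ ≤ ∑ k ∈ range N, ∑ m ∈ range N, u k * v m :=
        sum_le_sum fun k _ => sum_le_sum_of_subset_of_nonneg
          (range_subset_range.2 (N.sub_le k)) fun m _ _ => mul_nonneg (hu k) (hv m)
    _ = _ := (sum_mul_sum _ _ _ _).symm

def SolvesRenewal (c f : ℕ → ℝ) : Prop :=
  ∀ n, f n = (if n = 0 then 1 else 0) + ∑ p ∈ antidiagonal n, c p.1 * f p.2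

namespace SolvesRenewal

variable {c f : ℕ → ℝ} {s : ℝ}

lemma sum_range_le (hf : SolvesRenewal c f) (hc : 0 ≤ c) (hcs : HasSum c s) (hs : s < 1)
    (hf₀ : 0 ≤ f) (N : ℕ) : ∑ n ∈ range N, f n ≤ (1 - s)⁻¹ := by
  set S := ∑ n ∈ range N, f n
  have hS : S ≤ 1 + s * S := calc
    S = ∑ n ∈ range N, (if n = 0 then 1 else 0) +
        ∑ n ∈ range N, ∑ p ∈ antidiagonal n, c p.1 * f p.2 := by
      rw [← sum_add_distrib]
      exact sum_congr rfl fun n _ => hf n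
    _ ≤ 1 + (∑ k ∈ range N, c k) * S := by
      gcongr
      · rw [sum_ite_eq']
        split_ifs <;> norm_num
      · exact sum_range_sum_antidiagonal_mul_le hc hf₀ N
    _ ≤ 1 + s * S := by
      gcongr
      · exact sum_nonneg fun n _ => hf₀ n
      · exact sum_le_hasSum _ (fun k _ => hc k) hcs
  rw [← one_div, le_div_iff₀ (sub_pos.2 hs)]
  linarith

lemma hasSum (hf : SolvesRenewal c f) (hc : 0 ≤ c) (hcs : HasSum c s) (hs : s < 1)
    (hf₀ : 0 ≤ f) : HasSum f (1 - s)⁻¹ := by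
  have hF := (summable_of_sum_range_le hf₀ (hf.sum_range_le hc hcs hs hf₀)).hasSum
  have hrhs := (hasSum_ite_eq 0 (1 : ℝ)).add (hcs.sum_antidiagonal_mul_of_nonneg hF hc hf₀)
  rw [← funext hf] at hrhs
  have hfix := hF.unique hrhs
  convert hF
  field_simp [(sub_pos.2 hs).ne']
  linarith

lemma nat_mul_eq (hf : SolvesRenewal c f) (n : ℕ) :
    n * f n = ∑ p ∈ antidiagonal n, (p.1 * c p.1) * f p.2 +
      ∑ p ∈ antidiagonal n, c p.1 * (p.2 * f p.2) := by
  have hδ : (n : ℝ) * (if n = 0 then 1 else 0) = 0 := by split_ifs with h <;> simp [h]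
  rw [hf n, mul_add, hδ, zero_add, mul_sum, ← sum_add_distrib]
  refine sum_congr rfl fun p hp => ?_
  rw [← mem_antidiagonal.1 hp]
  push_cast
  ring

lemma hasSum_nat_mul (hf : SolvesRenewal c f) (hc : 0 ≤ c) (hcs : HasSum c s) (hs : s < 1)
    (hf₀ : 0 ≤ f) {μ : ℝ} (hμ : HasSum (fun n => n * c n) μ) :
    HasSum (fun n => n * f n) (μ / (1 - s) ^ 2) := by
  have hnc : 0 ≤ fun n : ℕ => n * c n := fun n => mul_nonneg n.cast_nonneg (hc n)
  have hnf : 0 ≤ fun n : ℕ => n * f n := fun n => mul_nonneg n.cast_nonneg (hf₀ n)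
  have hs' : 0 < 1 - s := sub_pos.2 hs
  have hbound (N : ℕ) : ∑ n ∈ range N, n * f n ≤ μ / (1 - s) ^ 2 := by
    set T := ∑ n ∈ range N, n * f n
    have hT : T ≤ μ * (1 - s)⁻¹ + s * T := calc
      T = ∑ n ∈ range N, ∑ p ∈ antidiagonal n, (p.1 * c p.1) * f p.2 +
          ∑ n ∈ range N, ∑ p ∈ antidiagonal n, c p.1 * (p.2 * f p.2) := by
        rw [← sum_add_distrib]
        exact sum_congr rfl fun n _ => hf.nat_mul_eq n
      _ ≤ (∑ k ∈ range N, k * c k) * (∑ m ∈ range N, f m) + (∑ k ∈ range N, c k) * T :=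
        add_le_add (sum_range_sum_antidiagonal_mul_le hnc hf₀ N)
          (sum_range_sum_antidiagonal_mul_le hc hnf N)
      _ ≤ μ * (1 - s)⁻¹ + s * T := by
        gcongr
        · exact sum_nonneg fun n _ => hf₀ n
        · exact hμ.nonneg hnc
        · exact sum_le_hasSum _ (fun k _ => hnc k) hμ
        · exact hf.sum_range_le hc hcs hs hf₀ N
        · exact sum_nonneg fun n _ => hnf n
        · exact sum_le_hasSum _ (fun k _ => hc k) hcs
    calc T ≤ μ * (1 - s)⁻¹ / (1 - s) := by
          rw [le_div_iff₀ hs']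
          linarith
      _ = μ / (1 - s) ^ 2 := by field_simp
  have hM := (summable_of_sum_range_le hnf hbound).hasSum
  have hrhs := (hμ.sum_antidiagonal_mul_of_nonneg (hf.hasSum hc hcs hs hf₀) hnc hf₀).add
    (hcs.sum_antidiagonal_mul_of_nonneg hM hc hnf)
  rw [← funext hf.nat_mul_eq] at hrhs
  have hfix := hM.unique hrhs
  convert hM
  field_simp
  linear_combination (s - 1) * hfix - μ * inv_mul_cancel₀ hs'.ne'

end SolvesRenewal

section Words

open List

lemma forall_getLast_append_true_iff (l t : List Bool) :
    (∀ h : l ++ true :: t ≠ [], (l ++ true :: t).getLast h = true) ↔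
      ∀ h : t ≠ [], t.getLast h = true := by
  rcases eq_or_ne t [] with rfl | ht
  · simp
  · simp [getLast_append_of_ne_nil, getLast_cons ht, ht]

lemma not_replicate_false_prefix {q k : ℕ} (hk : k < q) (t : List Bool) :
    ¬ replicate q false <+: replicate k false ++ true :: t := fun h => by
  have := h.getElem (i := k) (by simpa using hk)
  simp [getElem_append_right] at this

lemma replicate_false_infix_iff {q k : ℕ} (hk : k < q) (t : List Bool) :
    replicate q false <:+: replicate k false ++ true :: t ↔ replicate q false <:+: t := by
  induction k with
  | zero => exact infix_cons_iff.trans (or_iff_right (not_replicate_false_prefix hk t))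
  | succ k ih =>
    exact infix_cons_iff.trans
      ((or_iff_right (not_replicate_false_prefix hk t)).trans (ih (by omega)))

lemma goodWord_replicate_append_true {q k : ℕ} (hk : k < q) (t : List Bool) :
    goodWord q (replicate k false ++ true :: t) ↔ goodWord q t := by
  rw [goodWord, goodWord, replicate_false_infix_iff hk, forall_getLast_append_true_iff]

lemma lt_of_goodWord_replicate_append {q k : ℕ} {l : List Bool}
    (h : goodWord q (replicate k false ++ l)) : k < q := by
  by_contra! hqk
  exact h.1 ((prefix_replicate_iff.2 ⟨by simpa using hqk, by simp⟩).trans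
    (prefix_append _ _)).isInfix

lemma exists_eq_replicate_false_append_true {l : List Bool} (h : true ∈ l) :
    ∃ k t, l = replicate k false ++ true :: t := by
  obtain ⟨s, t, rfl, hs⟩ := eq_append_cons_of_mem h
  have hs' : s = replicate s.length false :=
    eq_replicate_iff.2 ⟨rfl, fun b hb => by simpa using ne_of_mem_of_not_mem hb hs⟩
  exact ⟨s.length, t, by rw [← hs']⟩

lemma replicate_false_append_true_inj :
    ∀ {k k' : ℕ} {t t' : List Bool},
      replicate k false ++ true :: t = replicate k' false ++ true :: t' → k = k' ∧ t = t'
  | 0, 0, _, _, h => by simpa using h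
  | 0, _ + 1, _, _, h => by simp [replicate_succ] at h
  | _ + 1, 0, _, _, h => by simp [replicate_succ] at h
  | _ + 1, _ + 1, _, _, h => by
    obtain ⟨rfl, rfl⟩ := replicate_false_append_true_inj (by simpa [replicate_succ] using h)
    exact ⟨rfl, rfl⟩

abbrev GoodList (q n : ℕ) : Type := {l : List Bool // l.length = n ∧ goodWord q l}

def wordEquivGoodList (q n : ℕ) :
    {w : Fin n → Bool // goodWord q (List.ofFn w)} ≃ GoodList q n :=
  ((Equiv.vectorEquivFin Bool n).symm.subtypeEquiv fun w => by
      rw [← List.Vector.toList_ofFn]; rfl).trans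
    (Equiv.subtypeSubtypeEquivSubtypeInter (fun l : List Bool => l.length = n) (goodWord q))

instance (q n : ℕ) : Finite (GoodList q n) := Finite.of_equiv _ (wordEquivGoodList q n)

lemma wordCount_eq_card (q n : ℕ) : wordCount q n = Nat.card (GoodList q n) :=
  Nat.card_congr (wordEquivGoodList q n)

lemma wordCount_zero {q : ℕ} (hq : 1 ≤ q) : wordCount q 0 = 1 := by
  rw [wordCount_eq_card, Nat.card_eq_one_iff_exists]
  refine ⟨⟨[], rfl, ?_, fun h => absurd rfl h⟩, fun ⟨l, hl, _⟩ => ?_⟩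
  · simpa [List.infix_nil] using Nat.one_le_iff_ne_zero.1 hq
  · exact Subtype.ext (List.eq_nil_of_length_eq_zero hl)

def prependBlock (q n : ℕ) :
    (Σ p : {p ∈ antidiagonal n | p.1 < q}, GoodList q p.1.2) → GoodList q (n + 1)
  | ⟨⟨(k, m), hp⟩, ⟨t, ht, hgood⟩⟩ =>
    have hp : k + m = n ∧ k < q := by simpa using hp
    ⟨replicate k false ++ true :: t,
      by simp only [length_append, length_replicate, length_cons, ht]; omega,
      (goodWord_replicate_append_true hp.2 t).2 hgood⟩

lemma prependBlock_bijective (q n : ℕ) : Function.Bijective (prependBlock q n) := by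
  constructor
  · rintro ⟨⟨⟨k, m⟩, hp⟩, ⟨t, ht, _⟩⟩ ⟨⟨⟨k', m'⟩, hp'⟩, ⟨t', ht', _⟩⟩ h
    obtain ⟨rfl, rfl⟩ := replicate_false_append_true_inj (congrArg Subtype.val h)
    obtain rfl : m = m' := ht.symm.trans ht'
    rfl
  · rintro ⟨l, hlen, hl⟩
    have hne : l ≠ [] := ne_nil_of_length_eq_add_one hlen
    obtain ⟨k, t, rfl⟩ := exists_eq_replicate_false_append_true (hl.2 hne ▸ getLast_mem hne)
    have hk := lt_of_goodWord_replicate_append hl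
    have hkt : k + t.length = n := by simpa [← add_assoc] using hlen
    exact ⟨⟨⟨(k, t.length), mem_filter.2 ⟨mem_antidiagonal.2 hkt, hk⟩⟩,
      ⟨t, rfl, (goodWord_replicate_append_true hk t).1 hl⟩⟩, rfl⟩

lemma wordCount_succ (q n : ℕ) :
    wordCount q (n + 1) = ∑ p ∈ antidiagonal n with p.1 < q, wordCount q p.2 := by
  rw [wordCount_eq_card, ← Nat.card_congr (Equiv.ofBijective _ (prependBlock_bijective q n)),
    Nat.card_sigma]
  simp only [wordCount_eq_card]
  exact sum_coe_sort _ fun p : ℕ × ℕ => Nat.card (GoodList q p.2)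

end Words

noncomputable def blockWeight (q k : ℕ) : ℝ := if k ∈ Ioc 0 q then 1 / 2 ^ k else 0

lemma blockWeight_nonneg (q : ℕ) : 0 ≤ blockWeight q := fun k => by
  unfold blockWeight
  split_ifs <;> positivity

lemma hasSum_mul_blockWeight (g : ℕ → ℝ) (q : ℕ) :
    HasSum (fun k => g k * blockWeight q k) (∑ k ∈ Ioc 0 q, g k / 2 ^ k) := by
  have h : HasSum (fun k => g k * blockWeight q k) (∑ k ∈ Ioc 0 q, g k * blockWeight q k) :=
    hasSum_sum_of_ne_finset_zero fun k hk => by simp [blockWeight, hk]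
  rwa [sum_congr rfl fun k hk => by rw [blockWeight, if_pos hk, mul_one_div]] at h

lemma sum_Ioc_one_div_two_pow (q : ℕ) : ∑ k ∈ Ioc 0 q, (1 : ℝ) / 2 ^ k = 1 - 1 / 2 ^ q := by
  induction q with
  | zero => simp
  | succ q ih =>
    rw [sum_Ioc_succ_top q.zero_le, ih]
    field_simp
    ring

lemma sum_Ioc_nat_div_two_pow (q : ℕ) :
    ∑ k ∈ Ioc 0 q, (k : ℝ) / 2 ^ k = 2 - (q + 2) / 2 ^ q := by
  induction q with
  | zero => norm_num
  | succ q ih =>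
    rw [sum_Ioc_succ_top q.zero_le, ih]
    field_simp
    push_cast
    ring

lemma solvesRenewal_wordCount {q : ℕ} (hq : 1 ≤ q) :
    SolvesRenewal (blockWeight q) fun n => wordCount q n / 2 ^ n
  | 0 => by simp [wordCount_zero hq, blockWeight]
  | n + 1 => by
    dsimp only
    simp only [Nat.sum_antidiagonal_succ, blockWeight, mem_Ioc, lt_irrefl, false_and, if_false,
      zero_mul, zero_add, Nat.add_one_ne_zero, Nat.succ_pos, true_and, Nat.add_one_le_iff]
    rw [wordCount_succ, Nat.cast_sum, sum_div, sum_filter]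
    refine sum_congr rfl fun p hp => ?_
    rw [← mem_antidiagonal.1 hp]
    split_ifs
    · field_simp
      ring
    · simp

theorem wordCount_first_derivative_sum (q : ℕ) (hq : 1 ≤ q) :
    HasSum (fun n : ℕ => (wordCount q n : ℝ) * ((n : ℝ) + q) / 2 ^ (n + q))
      (2 * (2 ^ q - 1)) := by
  have hren := solvesRenewal_wordCount hq
  have hcs : HasSum (blockWeight q) (1 - 1 / 2 ^ q) := by
    simpa only [Pi.one_apply, one_mul, sum_Ioc_one_div_two_pow] using hasSum_mul_blockWeight 1 q
  have hμ : HasSum (fun k => k * blockWeight q k) (2 - (q + 2) / 2 ^ q) := by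
    simpa only [sum_Ioc_nat_div_two_pow] using hasSum_mul_blockWeight Nat.cast q
  have hs : 1 - 1 / 2 ^ q < (1 : ℝ) := sub_lt_self 1 (by positivity)
  have hb₀ : 0 ≤ fun n => (wordCount q n : ℝ) / 2 ^ n := fun n => by positivity
  have hA := hren.hasSum (blockWeight_nonneg q) hcs hs hb₀
  have hB := hren.hasSum_nat_mul (blockWeight_nonneg q) hcs hs hb₀ hμ
  rw [sub_sub_cancel] at hA hB
  have hvalue : (2 * (2 ^ q - 1) : ℝ) =
      ((2 - (q + 2) / 2 ^ q) / (1 / 2 ^ q) ^ 2 + q * (1 / 2 ^ q)⁻¹) / 2 ^ q := by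
    field_simp
    ring
  rw [hvalue]
  refine ((hB.add (hA.mul_left (q : ℝ))).div_const (2 ^ q)).congr_fun fun n => ?_
  field_simp
  ring
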